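/- The image of the derivation algebra of L₁ under the matrix exponential equals the automorphism group of L₁: for every automorphism σ of the ω-Lie algebra L₁ there exists a derivation d of L₁ with exp(d) = σ, and conversely exp(d) is an automorphism of L₁ for every derivation d of L₁. (Here derivations and automorphisms are identified with their 3×3 complex matrices relative to the basis x, y, z, and exp denotes the matrix exponential.) -/

import Mathlib

noncomputable section

/-- The underlying space ℂ³ of the ω-Lie algebra L₁. -/
abbrev V3 : Type := Fin 3 → ℂ

/-- The basis vector x = e₁. -/
def vx : V3 := ![1, 0, 0]

/-- The basis vector y = e₂. -/
def vy : V3 := ![0, 1, 0]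

/-- The basis vector z = e₃. -/
def vz : V3 := ![0, 0, 1]

/-- A 3×3 complex matrix is (identified with) a derivation of the bracket `b`. -/
def IsDerMat (b : V3 →ₗ[ℂ] V3 →ₗ[ℂ] V3) (A : Matrix (Fin 3) (Fin 3) ℂ) : Prop :=
  ∀ u v : V3,
    Matrix.toLin' A (b u v) = b (Matrix.toLin' A u) v + b u (Matrix.toLin' A v)

/-- A 3×3 complex matrix is (identified with) an automorphism of the bracket `b`. -/
def IsAutMat (b : V3 →ₗ[ℂ] V3 →ₗ[ℂ] V3) (A : Matrix (Fin 3) (Fin 3) ℂ) : Prop :=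
  Function.Bijective (Matrix.toLin' A) ∧
    ∀ u v : V3, Matrix.toLin' A (b u v) = b (Matrix.toLin' A u) (Matrix.toLin' A v)

/-! In coordinates the bracket of L₁ is `[u, v] = (0, u₀v₁ - u₁v₀, u₁v₂ - u₂v₁)`. Evaluating the
defining identities on basis pairs shows that the derivations are exactly the matrices with rows
`0, 0, (c, -c, u)` and the automorphisms exactly those with rows `e₁, e₂, (p, -p, t)`, `t ≠ 0`.
Such a derivation `D` satisfies `D² = u D`, so `exp D = 1 + ((eᵘ - 1) / u) D` (read as `1 + D` when
`u = 0`), an automorphism with `t = eᵘ`; conversely `t = e^(log t)`, and `c` can be chosen to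
produce any `p`. -/

open NormedSpace Matrix

theorem NormedSpace.exp_eq_one_add_of_mul_self_eq_zero {𝔸 : Type*} [Ring 𝔸] [Algebra ℚ 𝔸]
    [TopologicalSpace 𝔸] [IsTopologicalRing 𝔸] [T2Space 𝔸] {A : 𝔸} (hA : A * A = 0) :
    exp A = 1 + A := by
  have hpow : ∀ n, 2 ≤ n → A ^ n = 0 := fun n hn => by
    obtain ⟨k, rfl⟩ := Nat.exists_eq_add_of_le hn
    rw [pow_add, sq, hA, zero_mul]
  rw [exp_eq_tsum_rat]
  dsimp only
  rw [tsum_eq_sum (s := Finset.range 2) fun n hn => by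
    rw [hpow n (by simp at hn; omega), smul_zero]]
  simp [Finset.sum_range_succ]

theorem NormedSpace.exp_smul_of_isIdempotentElem {𝕂 𝔸 : Type*} [RCLike 𝕂] [NormedRing 𝔸]
    [NormedAlgebra 𝕂 𝔸] [CompleteSpace 𝔸] {P : 𝔸} (hP : IsIdempotentElem P) (u : 𝕂) :
    exp (u • P) = 1 + (exp u - 1) • P := by
  have hpow : ∀ n, (u • P) ^ n = u ^ n • P + if n = 0 then 1 - P else 0 := by
    rintro (_ | n)
    · simp
    · rw [smul_pow, hP.pow_succ_eq]; simp
  have hsum :=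
    ((exp_series_hasSum_exp' (𝕂 := 𝕂) u).smul_const P).add (hasSum_ite_eq 0 (1 - P))
  refine (exp_series_hasSum_exp' (𝕂 := 𝕂) (u • P)).unique ?_
  convert hsum using 1
  · funext n
    rw [hpow]
    split_ifs with h <;> simp [h, smul_smul]
  · rw [sub_smul, one_smul]
    abel

theorem Matrix.bijective_toLin'_iff_det_ne_zero {n K : Type*} [Fintype n] [DecidableEq n]
    [Field K] (B : Matrix n n K) : Function.Bijective (toLin' B) ↔ B.det ≠ 0 := by
  rw [← isUnit_iff_ne_zero, ← isUnit_iff_isUnit_det, funext (toLin'_apply B), Function.Bijective,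
    mulVec_injective_iff_isUnit, mulVec_surjective_iff_isUnit, and_self]

namespace L1

theorem bracket_eq (b : V3 →ₗ[ℂ] V3 →ₗ[ℂ] V3) (hskew : ∀ u v : V3, b u v = - b v u)
    (hxy : b vx vy = vy) (hxz : b vx vz = 0) (hyz : b vy vz = vz) (u v : V3) :
    b u v = ![0, u 0 * v 1 - u 1 * v 0, u 1 * v 2 - u 2 * v 1] := by
  have hself : ∀ w, b w w = 0 := fun w => self_eq_neg.mp (hskew w w)
  have hbasis : ∀ w : V3, w = w 0 • vx + w 1 • vy + w 2 • vz := fun w => by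
    funext i; fin_cases i <;> simp [vx, vy, vz]
  rw [hbasis u, hbasis v]
  simp only [map_add, map_smul, LinearMap.add_apply, LinearMap.smul_apply, hskew vy vx,
    hskew vz vx, hskew vz vy, hxy, hxz, hyz, hself, smul_zero, smul_neg, neg_zero]
  funext i
  fin_cases i <;> simp [vx, vy, vz] <;> ring

def derMatrix (c u : ℂ) : Matrix (Fin 3) (Fin 3) ℂ := !![0, 0, 0; 0, 0, 0; c, -c, u]

def autMatrix (p t : ℂ) : Matrix (Fin 3) (Fin 3) ℂ := !![1, 0, 0; 0, 1, 0; p, -p, t]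

section

variable {b : V3 →ₗ[ℂ] V3 →ₗ[ℂ] V3}
  (hb : ∀ u v : V3, b u v = ![0, u 0 * v 1 - u 1 * v 0, u 1 * v 2 - u 2 * v 1])
include hb

theorem isDerMat_iff (A : Matrix (Fin 3) (Fin 3) ℂ) :
    IsDerMat b A ↔ ∃ c u, A = derMatrix c u := by
  constructor
  · intro hA
    obtain ⟨h01, h00, h21⟩ : A 0 1 = 0 ∧ A 0 0 = 0 ∧ A 2 1 = -A 2 0 := by
      simpa [hb, mulVec, dotProduct, Fin.sum_univ_three, vx, vy, vz, funext_iff,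
        Fin.forall_fin_succ] using hA vx vy
    obtain ⟨h12, h10⟩ : 0 = A 1 2 ∧ 0 = A 1 0 := by
      simpa [hb, mulVec, dotProduct, Fin.sum_univ_three, vx, vy, vz, funext_iff,
        Fin.forall_fin_succ] using hA vx vz
    obtain ⟨h02, -, h11⟩ : A 0 2 = 0 ∧ A 1 2 = -A 0 2 ∧ A 1 1 = 0 := by
      simpa [hb, mulVec, dotProduct, Fin.sum_univ_three, vx, vy, vz, funext_iff,
        Fin.forall_fin_succ] using hA vy vz
    refine ⟨A 2 0, A 2 2, ?_⟩
    ext i j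
    fin_cases i <;> fin_cases j <;> simp [derMatrix, h00, h01, h02, ← h10, h11, ← h12, h21]
  · rintro ⟨c, u, rfl⟩ v w
    simp only [toLin'_apply, hb]
    funext i
    fin_cases i <;> simp [derMatrix, mulVec, dotProduct, Fin.sum_univ_three]
    ring

theorem isAutMat_iff (B : Matrix (Fin 3) (Fin 3) ℂ) :
    IsAutMat b B ↔ ∃ p t, t ≠ 0 ∧ B = autMatrix p t := by
  rw [IsAutMat, Matrix.bijective_toLin'_iff_det_ne_zero]
  constructor
  · rintro ⟨hdet, hB⟩
    obtain ⟨h01, h11, h21⟩ : B 0 1 = 0 ∧ B 1 1 = B 0 0 * B 1 1 - B 1 0 * B 0 1 ∧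
        B 2 1 = B 1 0 * B 2 1 - B 2 0 * B 1 1 := by
      simpa [hb, mulVec, dotProduct, Fin.sum_univ_three, vx, vy, vz, funext_iff,
        Fin.forall_fin_succ] using hB vx vy
    obtain ⟨-, h10⟩ : 0 = B 0 0 * B 1 2 - B 1 0 * B 0 2 ∧ 0 = B 1 0 * B 2 2 - B 2 0 * B 1 2 := by
      simpa [hb, mulVec, dotProduct, Fin.sum_univ_three, vx, vy, vz, funext_iff,
        Fin.forall_fin_succ] using hB vx vz
    obtain ⟨h02, h12, h22⟩ : B 0 2 = 0 ∧ B 1 2 = B 0 1 * B 1 2 - B 1 1 * B 0 2 ∧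
        B 2 2 = B 1 1 * B 2 2 - B 2 1 * B 1 2 := by
      simpa [hb, mulVec, dotProduct, Fin.sum_univ_three, vx, vy, vz, funext_iff,
        Fin.forall_fin_succ] using hB vy vz
    replace h12 : B 1 2 = 0 := by simpa [h01, h02] using h12
    have hdiag : B 0 0 * B 1 1 * B 2 2 ≠ 0 := by simpa [det_fin_three, h01, h02, h12] using hdet
    obtain ⟨⟨-, h11'⟩, h22'⟩ := mul_ne_zero_iff.mp hdiag |>.imp_left mul_ne_zero_iff.mp
    have h00 : B 0 0 = 1 := by
      rw [h01, mul_zero, sub_zero] at h11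
      exact (mul_eq_right₀ h11').mp h11.symm
    replace h11 : B 1 1 = 1 := by
      rw [h12, mul_zero, sub_zero] at h22
      exact (mul_eq_right₀ h22').mp h22.symm
    replace h10 : B 1 0 = 0 := by simpa [h12, h22'] using h10
    replace h21 : B 2 1 = -B 2 0 := by
      rw [h10, h11] at h21
      linear_combination h21
    refine ⟨B 2 0, B 2 2, h22', ?_⟩
    ext i j
    fin_cases i <;> fin_cases j <;> simp [autMatrix, h00, h01, h02, h10, h11, h12, h21]
  · rintro ⟨p, t, ht, rfl⟩
    refine ⟨by simpa [autMatrix, det_fin_three] using ht, fun v w => ?_⟩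
    simp only [toLin'_apply, hb]
    funext i
    fin_cases i <;> simp [autMatrix, mulVec, dotProduct, Fin.sum_univ_three]
    ring

end

theorem one_add_smul_derMatrix (s c u : ℂ) :
    1 + s • derMatrix c u = autMatrix (s * c) (1 + s * u) := by
  ext i j
  fin_cases i <;> fin_cases j <;> simp [derMatrix, autMatrix]

section

attribute [local instance] Matrix.linftyOpNormedRing Matrix.linftyOpNormedAlgebra

theorem exp_derMatrix_zero (c : ℂ) : exp (derMatrix c 0) = autMatrix c 1 := by
  have hsq : derMatrix c 0 * derMatrix c 0 = 0 := by
    ext i j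
    fin_cases i <;> fin_cases j <;> simp [derMatrix, mul_apply, Fin.sum_univ_three]
  rw [exp_eq_one_add_of_mul_self_eq_zero hsq, ← one_smul ℂ (derMatrix c 0),
    one_add_smul_derMatrix]
  simp

theorem exp_derMatrix_of_ne_zero (c : ℂ) {u : ℂ} (hu : u ≠ 0) :
    exp (derMatrix c u) = autMatrix ((Complex.exp u - 1) * (c / u)) (Complex.exp u) := by
  have hscale : derMatrix c u = u • derMatrix (c / u) 1 := by
    ext i j
    fin_cases i <;> fin_cases j <;> simp [derMatrix] <;> field_simp
  have hidem : IsIdempotentElem (derMatrix (c / u) 1) := by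
    ext i j
    fin_cases i <;> fin_cases j <;> simp [derMatrix, mul_apply, Fin.sum_univ_three]
  rw [hscale]
  refine (exp_smul_of_isIdempotentElem hidem u).trans ?_
  rw [← Complex.exp_eq_exp_ℂ, one_add_smul_derMatrix]
  simp

end

theorem exists_exp_derMatrix_eq_autMatrix (p : ℂ) {t : ℂ} (ht : t ≠ 0) :
    ∃ c u, exp (derMatrix c u) = autMatrix p t := by
  rcases eq_or_ne t 1 with rfl | ht1
  · exact ⟨p, 0, exp_derMatrix_zero p⟩
  have hlog : Complex.log t ≠ 0 := fun h => ht1 <| by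
    rw [← Complex.exp_log ht, h, Complex.exp_zero]
  refine ⟨p * Complex.log t / (t - 1), Complex.log t, ?_⟩
  rw [exp_derMatrix_of_ne_zero _ hlog, Complex.exp_log ht]
  congr 1
  field_simp [sub_ne_zero.mpr ht1]

end L1

/-- The image of the derivation algebra of the ω-Lie algebra L₁ (with
`[x,y] = y`, `[x,z] = 0`, `[y,z] = z`) under the matrix exponential is exactly the
automorphism group of L₁: the exponential of every derivation is an automorphism, and
every automorphism is the exponential of some derivation. -/
theorem exp_derivations_eq_automorphisms_L1
    (b : V3 →ₗ[ℂ] V3 →ₗ[ℂ] V3)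
    (hskew : ∀ u v : V3, b u v = - b v u)
    (hxy : b vx vy = vy) (hxz : b vx vz = 0) (hyz : b vy vz = vz) :
    (∀ A : Matrix (Fin 3) (Fin 3) ℂ, IsDerMat b A → IsAutMat b (NormedSpace.exp A)) ∧
    (∀ B : Matrix (Fin 3) (Fin 3) ℂ, IsAutMat b B →
      ∃ A : Matrix (Fin 3) (Fin 3) ℂ, IsDerMat b A ∧ NormedSpace.exp A = B) := by
  have hb := L1.bracket_eq b hskew hxy hxz hyz
  refine ⟨fun A hA => ?_, fun B hB => ?_⟩
  · obtain ⟨c, u, rfl⟩ := (L1.isDerMat_iff hb A).1 hA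
    rw [L1.isAutMat_iff hb]
    rcases eq_or_ne u 0 with rfl | hu
    · exact ⟨c, 1, one_ne_zero, L1.exp_derMatrix_zero c⟩
    · exact ⟨_, _, Complex.exp_ne_zero u, L1.exp_derMatrix_of_ne_zero c hu⟩
  · obtain ⟨p, t, ht, rfl⟩ := (L1.isAutMat_iff hb B).1 hB
    obtain ⟨c, u, hexp⟩ := L1.exists_exp_derMatrix_eq_autMatrix p ht
    exact ⟨_, (L1.isDerMat_iff hb _).2 ⟨c, u, rfl⟩, hexp⟩
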